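/- arXiv:2302.02743 — 4 statements merged into one kernel-verified Lean document; each statement's English description precedes it below -/
import Mathlib

section
/- For every T > 0 and every x in [0,1], |sqrt(x) - (2x/π) ∫_{-T}^{T} e^s/(e^{2s}+x) ds| < (4/π) e^{-T}. -/
open Real MeasureTheory intervalIntegral

lemma arctan_pos_of_pos {t : ℝ} (ht : 0 < t) : 0 < Real.arctan t := by
  rw [← Real.arctan_zero]
  exact Real.arctan_strictMono ht

lemma arctan_lt_self_of_pos {t : ℝ} (ht : 0 < t) : Real.arctan t < t := by
  have h1 : 0 < Real.arctan t := arctan_pos_of_pos ht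
  have h2 : Real.arctan t < Real.pi / 2 := Real.arctan_lt_pi_div_two t
  have := Real.lt_tan h1 h2
  rwa [Real.tan_arctan] at this

theorem truncation_error_bound (T : ℝ) (hT : 0 < T) (x : ℝ) (hx : x ∈ Set.Icc (0:ℝ) 1) :
    |Real.sqrt x - (2 * x / Real.pi) * ∫ s in (-T)..T, Real.exp s / (Real.exp (2 * s) + x)|
      < (4 / Real.pi) * Real.exp (-T) := by
  obtain ⟨hx0, hx1⟩ := hx
  rcases eq_or_lt_of_le hx0 with h0 | h0
  · rw [← h0]
    simp
    positivity
  · set r := Real.sqrt x with hr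
    have hr0 : 0 < r := Real.sqrt_pos.mpr h0
    have hrx : r * r = x := Real.mul_self_sqrt hx0
    have hπ : (0:ℝ) < Real.pi := Real.pi_pos
    have key : (∫ s in (-T)..T, Real.exp s / (Real.exp (2*s) + x))
        = r⁻¹ * Real.arctan (Real.exp T / r) - r⁻¹ * Real.arctan (Real.exp (-T) / r) := by
      have hderiv : ∀ s ∈ Set.uIcc (-T) T,
          HasDerivAt (fun s => r⁻¹ * Real.arctan (Real.exp s / r))
          (Real.exp s / (Real.exp (2*s) + x)) s := by
        intro s _
        have h1 : HasDerivAt (fun s => Real.exp s / r) (Real.exp s / r) s :=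
          (Real.hasDerivAt_exp s).div_const r
        have h2 := (Real.hasDerivAt_arctan (Real.exp s / r)).comp s h1
        have h3 := h2.const_mul r⁻¹
        refine h3.congr_deriv ?_
        have he : Real.exp (2*s) = Real.exp s * Real.exp s := by
          rw [two_mul, Real.exp_add]
        have hx' : Real.exp (2*s) + x ≠ 0 := by positivity
        have hd : (1 + (Real.exp s / r)^2) ≠ 0 := by positivity
        field_simp
        rw [he, ← hrx]
        ring
      have hcont : Continuous fun s => Real.exp s / (Real.exp (2*s) + x) := by
        apply Real.continuous_exp.div
          ((Real.continuous_exp.comp (continuous_const.mul continuous_id)).add continuous_const)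
        intro s
        show Real.exp (2*s) + x ≠ 0
        positivity
      exact intervalIntegral.integral_eq_sub_of_hasDerivAt hderiv (hcont.intervalIntegrable _ _)
    rw [key]
    have hxr : x = r * r := hrx.symm
    have hA : Real.pi / 2 - Real.arctan (Real.exp T / r) = Real.arctan (r / Real.exp T) := by
      have hp : 0 < Real.exp T / r := by positivity
      have := Real.arctan_inv_of_pos hp
      rw [show (Real.exp T / r)⁻¹ = r / Real.exp T by field_simp] at this
      linarith
    have hB0 : 0 < Real.arctan (Real.exp (-T) / r) := arctan_pos_of_pos (by positivity)
    have hA0 : 0 < Real.arctan (r / Real.exp T) := arctan_pos_of_pos (by positivity)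
    have heq : Real.sqrt x - (2 * x / Real.pi) *
        (r⁻¹ * Real.arctan (Real.exp T / r) - r⁻¹ * Real.arctan (Real.exp (-T) / r))
        = (2 * r / Real.pi) * (Real.arctan (r / Real.exp T)
            + Real.arctan (Real.exp (-T) / r)) := by
      rw [← hA, ← hr, hxr]
      field_simp
      ring
    rw [heq, abs_of_pos (by positivity)]
    have b1 : Real.arctan (r / Real.exp T) < r / Real.exp T :=
      arctan_lt_self_of_pos (by positivity)
    have b2 : Real.arctan (Real.exp (-T) / r) < Real.exp (-T) / r :=
      arctan_lt_self_of_pos (by positivity)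
    have hre : r / Real.exp T = r * Real.exp (-T) := by
      rw [Real.exp_neg]; ring
    have step : (2 * r / Real.pi) * (Real.arctan (r / Real.exp T)
        + Real.arctan (Real.exp (-T) / r))
        < (2 * r / Real.pi) * (r * Real.exp (-T) + Real.exp (-T) / r) := by
      apply mul_lt_mul_of_pos_left _ (by positivity)
      have b1' : Real.arctan (r / Real.exp T) < r * Real.exp (-T) := by
        rw [← hre]; exact b1
      linarith
    have final : (2 * r / Real.pi) * (r * Real.exp (-T) + Real.exp (-T) / r)
        ≤ (4 / Real.pi) * Real.exp (-T) := by
      rw [div_mul_eq_mul_div, div_mul_eq_mul_div, div_le_div_iff₀ hπ hπ]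
      have : 2 * r * (r * Real.exp (-T) + Real.exp (-T) / r)
          = 2 * (x + 1) * Real.exp (-T) := by
        rw [hxr]; field_simp
      rw [this]
      have he0 : 0 < Real.exp (-T) := Real.exp_pos _
      nlinarith [mul_nonneg (mul_nonneg (sub_nonneg.mpr hx1) he0.le) hπ.le]
    linarith
end

section
/- Define f(u,x) = (x/π) · (1/√u) · e^{√u - T} / (e^{2(√u - T)} + x) for u > 0. For fixed x with 0 < x ≤ e^{2√2 - 2T}·(√2+1)/(√2-1), the function u ↦ f(u,x) is monotonically decreasing on (0, ∞). -/
open Real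

private lemma key_ineq (T x s : ℝ) (hx : 0 < x)
    (hx2 : x ≤ Real.exp (2 * Real.sqrt 2 - 2 * T) * (Real.sqrt 2 + 1) / (Real.sqrt 2 - 1))
    (hs : 0 < s) :
    s * (x - Real.exp (2 * (s - T))) ≤ Real.exp (2 * (s - T)) + x := by
  have h2 : (1:ℝ) < Real.sqrt 2 := by
    nlinarith [Real.sqrt_nonneg 2, Real.sq_sqrt (show (0:ℝ) ≤ 2 by norm_num)]
  have hB : 0 < Real.exp (2 * (s - T)) := Real.exp_pos _
  set B := Real.exp (2 * (s - T)) with hBdef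
  rcases le_or_gt s 1 with h1 | h1
  · nlinarith [mul_nonneg hs.le hB.le, mul_le_of_le_one_left hx.le h1]
  · set E0 := Real.exp (2 * Real.sqrt 2 - 2 * T) with hE0def
    have hE0 : 0 < E0 := Real.exp_pos _
    have hx2' : x * (Real.sqrt 2 - 1) ≤ E0 * (Real.sqrt 2 + 1) :=
      (le_div_iff₀ (by linarith)).mp hx2
    have hE : E0 * (1 + 2 * (s - Real.sqrt 2)) ≤ B := by
      have hsplit : B = E0 * Real.exp (2 * (s - Real.sqrt 2)) := by
        rw [hBdef, hE0def, ← Real.exp_add]; ring_nf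
      rw [hsplit]
      have h3 := Real.add_one_le_exp (2 * (s - Real.sqrt 2))
      nlinarith [hE0]
    have hr : Real.sqrt 2 ^ 2 = 2 := Real.sq_sqrt (by norm_num)
    have poly : (Real.sqrt 2 + 1) * (s - 1) ≤
        (Real.sqrt 2 - 1) * (1 + 2 * (s - Real.sqrt 2)) * (s + 1) := by
      nlinarith [sq_nonneg (s - Real.sqrt 2), hr, h2, h1]
    have step1 : x * (Real.sqrt 2 - 1) * (s - 1) ≤ E0 * (Real.sqrt 2 + 1) * (s - 1) :=
      mul_le_mul_of_nonneg_right hx2' (by linarith)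
    have step2 : E0 * ((Real.sqrt 2 + 1) * (s - 1)) ≤
        E0 * ((Real.sqrt 2 - 1) * (1 + 2 * (s - Real.sqrt 2)) * (s + 1)) :=
      mul_le_mul_of_nonneg_left poly hE0.le
    have step3 : E0 * (1 + 2 * (s - Real.sqrt 2)) * ((Real.sqrt 2 - 1) * (s + 1)) ≤
        B * ((Real.sqrt 2 - 1) * (s + 1)) :=
      mul_le_mul_of_nonneg_right hE (by nlinarith)
    have hchain : x * (s - 1) * (Real.sqrt 2 - 1) ≤ B * (s + 1) * (Real.sqrt 2 - 1) := by
      nlinarith [step1, step2, step3]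
    have hfin : x * (s - 1) ≤ B * (s + 1) :=
      (mul_le_mul_iff_of_pos_right (by linarith : (0:ℝ) < Real.sqrt 2 - 1)).mp hchain
    nlinarith [hfin]

private lemma g_antitone (T x : ℝ) (hx : 0 < x)
    (hx2 : x ≤ Real.exp (2 * Real.sqrt 2 - 2 * T) * (Real.sqrt 2 + 1) / (Real.sqrt 2 - 1)) :
    AntitoneOn (fun s : ℝ =>
      (x / Real.pi) * (Real.exp (s - T) / (s * (Real.exp (2 * (s - T)) + x))))
      (Set.Ioi (0:ℝ)) := by
  have hπ : 0 < Real.pi := Real.pi_pos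
  have hderiv : ∀ s : ℝ, 0 < s → HasDerivAt
      (fun s : ℝ => (x / Real.pi) * (Real.exp (s - T) / (s * (Real.exp (2 * (s - T)) + x))))
      ((x / Real.pi) * ((Real.exp (s - T) * (s * (Real.exp (2 * (s - T)) + x)) -
        Real.exp (s - T) * ((Real.exp (2 * (s - T)) + x) + s * (2 * Real.exp (2 * (s - T))))) /
        (s * (Real.exp (2 * (s - T)) + x)) ^ 2)) s := by
    intro s hs
    have hA : HasDerivAt (fun s : ℝ => Real.exp (s - T)) (Real.exp (s - T)) s := by
      simpa using ((hasDerivAt_id s).sub_const T).exp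
    have hBdv : HasDerivAt (fun s : ℝ => Real.exp (2 * (s - T)))
        (2 * Real.exp (2 * (s - T))) s := by
      have := (((hasDerivAt_id s).sub_const T).const_mul 2).exp
      simpa [mul_comm] using this
    have hD : HasDerivAt (fun s : ℝ => s * (Real.exp (2 * (s - T)) + x))
        ((Real.exp (2 * (s - T)) + x) + s * (2 * Real.exp (2 * (s - T)))) s := by
      have := (hasDerivAt_id s).mul (hBdv.add_const x)
      simpa [add_comm, mul_comm, Pi.mul_def] using this
    have hDne : s * (Real.exp (2 * (s - T)) + x) ≠ 0 := by positivity
    exact (hA.div hD hDne).const_mul (x / Real.pi)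
  apply antitoneOn_of_deriv_nonpos (convex_Ioi 0)
  · intro s hs
    exact ((hderiv s hs).continuousAt).continuousWithinAt
  · rw [interior_Ioi]
    intro s hs
    exact ((hderiv s hs).differentiableAt).differentiableWithinAt
  · rw [interior_Ioi]
    intro s hs
    rw [(hderiv s hs).deriv]
    have hk := key_ineq T x s hx hx2 hs
    set B := Real.exp (2 * (s - T)) with hBdef
    have hA : 0 < Real.exp (s - T) := Real.exp_pos _
    have hnum : Real.exp (s - T) * (s * (B + x)) -
        Real.exp (s - T) * ((B + x) + s * (2 * B)) ≤ 0 := by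
      have h1 : Real.exp (s - T) * (s * (x - B) - (B + x)) ≤ 0 :=
        mul_nonpos_of_nonneg_of_nonpos hA.le (by linarith)
      nlinarith [h1]
    have hx0 : 0 ≤ x / Real.pi := by positivity
    exact mul_nonpos_of_nonneg_of_nonpos hx0
      (div_nonpos_of_nonpos_of_nonneg hnum (sq_nonneg _))

theorem integrand_antitone (T : ℝ) (hT : 0 < T) (x : ℝ)
    (hx : 0 < x)
    (hx2 : x ≤ Real.exp (2 * Real.sqrt 2 - 2 * T) * (Real.sqrt 2 + 1) / (Real.sqrt 2 - 1)) :
    AntitoneOn (fun u : ℝ =>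
      (x / Real.pi) * (1 / Real.sqrt u) *
        (Real.exp (Real.sqrt u - T) / (Real.exp (2 * (Real.sqrt u - T)) + x)))
      (Set.Ioi (0:ℝ)) := by
  have heq : (fun u : ℝ =>
      (x / Real.pi) * (1 / Real.sqrt u) *
        (Real.exp (Real.sqrt u - T) / (Real.exp (2 * (Real.sqrt u - T)) + x))) =
      (fun u : ℝ => (x / Real.pi) * (Real.exp (Real.sqrt u - T) /
        (Real.sqrt u * (Real.exp (2 * (Real.sqrt u - T)) + x)))) := by
    funext u
    simp only [div_eq_mul_inv, mul_inv, one_mul]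
    ring
  rw [heq]
  intro u hu v hv huv
  exact g_antitone T x hx hx2 (Set.mem_Ioi.mpr (Real.sqrt_pos.mpr hu))
    (Set.mem_Ioi.mpr (Real.sqrt_pos.mpr hv)) (Real.sqrt_le_sqrt huv)
end

section
/- Let f(u,x) = (x/π)(1/√u) e^{√u−T}/(e^{2(√u−T)}+x), I(x) = ∫_0^{4T²} f(u,x) du, and S(x) = h ∑_{j=1}^{N_t} f(jh, x) with T = √(N_t h / 4). If 0 < x ≤ e^{4−2T}, then 0 ≤ I(x) − S(x) and |I(x) − S(x)| < 2 e^{2−T}. -/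
open Real MeasureTheory intervalIntegral

lemma aux_phi_deriv_pos (x T t : ℝ) (hx : 0 < x) (hx2 : x ≤ Real.exp (4 - 2*T)) (ht : 0 < t) :
    0 < (Real.exp (t - T) + x * Real.exp (T - t)) + t * (Real.exp (t - T) - x * Real.exp (T - t)) := by
  have he : (0:ℝ) < Real.exp (t - T) := Real.exp_pos _
  have he2 : (0:ℝ) < Real.exp (T - t) := Real.exp_pos _
  rcases le_or_gt t 1 with h1 | h1
  · nlinarith [mul_pos hx he2]
  · have h9 : Real.exp 2 < 9 := by
      have h1 := Real.exp_one_lt_d9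
      have h2 : Real.exp 2 = Real.exp 1 * Real.exp 1 := by rw [← Real.exp_add]; norm_num
      nlinarith [Real.exp_pos 1]
    have h1' : 1 < Real.exp 2 := by
      rw [show (1:ℝ) = Real.exp 0 from (Real.exp_zero).symm]
      exact Real.exp_lt_exp.2 (by norm_num)
    have hbnd : 2*t - 1 ≤ Real.exp (2*t - 2) := by
      have := Real.add_one_le_exp (2*t - 2); linarith
    have hsplit : Real.exp (2*t - 4) * Real.exp 2 = Real.exp (2*t - 2) := by
      rw [← Real.exp_add]; ring_nf
    have key : t - 1 < Real.exp (2*t - 4) * (1 + t) := by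
      nlinarith [sq_nonneg (4*t + 1 - Real.exp 2), Real.exp_pos (2*t-4), Real.exp_pos 2]
    have hxe : x * Real.exp (T - t) * (t - 1) ≤ Real.exp (4 - T - t) * (t-1) := by
      have := mul_le_mul_of_nonneg_right (mul_le_mul_of_nonneg_right hx2 he2.le)
        (by linarith : (0:ℝ) ≤ t - 1)
      calc x * Real.exp (T - t) * (t - 1) ≤ Real.exp (4 - 2*T) * Real.exp (T - t) * (t-1) := this
        _ = Real.exp (4 - T - t) * (t-1) := by rw [← Real.exp_add]; ring_nf
    have hee2 : Real.exp (t - T) = Real.exp (2*t - 4) * Real.exp (4 - T - t) := by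
      rw [← Real.exp_add]; ring_nf
    have h3 : (t-1) * Real.exp (4 - T - t) < Real.exp (2*t-4) * (1+t) * Real.exp (4-T-t) :=
      mul_lt_mul_of_pos_right key (Real.exp_pos _)
    have h4 : Real.exp (t - T) * (1+t) = Real.exp (2*t-4) * (1+t) * Real.exp (4-T-t) := by
      rw [hee2]; ring
    nlinarith [h3, h4, hxe]


lemma aux_phi_mono (x T : ℝ) (hx : 0 < x) (hx2 : x ≤ Real.exp (4 - 2*T)) :
    StrictMonoOn (fun t => t * (Real.exp (t - T) + x * Real.exp (T - t))) (Set.Ici 0) := by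
  apply strictMonoOn_of_deriv_pos (convex_Ici 0)
  · exact Continuous.continuousOn (by continuity)
  · intro t ht
    rw [interior_Ici] at ht
    have h1 : HasDerivAt (fun s : ℝ => Real.exp (s - T)) (Real.exp (t - T)) t := by
      simpa using ((hasDerivAt_id t).sub_const T).exp
    have h2 : HasDerivAt (fun s : ℝ => x * Real.exp (T - s)) (x * (Real.exp (T - t) * (-1))) t := by
      exact (((hasDerivAt_id t).const_sub T).exp).const_mul x
    have hd : HasDerivAt (fun s => s * (Real.exp (s - T) + x * Real.exp (T - s)))
        ((Real.exp (t - T) + x * Real.exp (T - t)) + t * (Real.exp (t - T) - x * Real.exp (T - t))) t := by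
      have := (hasDerivAt_id t).mul (h1.add h2)
      refine this.congr_deriv ?_
      simp only [id, Pi.add_apply]; ring
    rw [hd.deriv]
    exact aux_phi_deriv_pos x T t hx hx2 ht


theorem quadrature_error_small_x (h : ℝ) (hh : 0 < h) (Nt : ℕ) (hNt : 0 < Nt)
    (T : ℝ) (hT : T = Real.sqrt (Nt * h / 4))
    (f : ℝ → ℝ → ℝ)
    (hf : ∀ u x, f u x =
      (x / Real.pi) * (1 / Real.sqrt u) *
        (Real.exp (Real.sqrt u - T) / (Real.exp (2 * (Real.sqrt u - T)) + x)))
    (I S : ℝ → ℝ)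
    (hI : ∀ x, I x = ∫ u in (0:ℝ)..(4 * T ^ 2), f u x)
    (hS : ∀ x, S x = h * ∑ j ∈ Finset.Icc 1 Nt, f (j * h) x)
    (x : ℝ) (hx : 0 < x) (hx2 : x ≤ Real.exp (4 - 2 * T)) :
    0 ≤ I x - S x ∧ |I x - S x| < 2 * Real.exp (2 - T) := by
  have hπ : (0:ℝ) < Real.pi := Real.pi_pos
  have hb : 0 < (Nt:ℝ) * h := mul_pos (by exact_mod_cast hNt) hh
  have h4T : 4 * T ^ 2 = (Nt:ℝ) * h := by
    rw [hT, Real.sq_sqrt (by positivity)]; ring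
  -- rewrite f in a convenient form
  have hfrw : ∀ u : ℝ, 0 < u → f u x =
      (x / Real.pi) / (Real.sqrt u * (Real.exp (Real.sqrt u - T) + x * Real.exp (T - Real.sqrt u))) := by
    intro u hu
    have hs : 0 < Real.sqrt u := Real.sqrt_pos.2 hu
    have key : Real.exp (Real.sqrt u - T) / (Real.exp (2*(Real.sqrt u - T)) + x)
        = 1 / (Real.exp (Real.sqrt u - T) + x * Real.exp (T - Real.sqrt u)) := by
      rw [div_eq_div_iff (by positivity) (by positivity),
        show (2*(Real.sqrt u - T)) = (Real.sqrt u - T) + (Real.sqrt u - T) by ring, Real.exp_add]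
      have h2 : Real.exp (Real.sqrt u - T) * Real.exp (T - Real.sqrt u) = 1 := by
        rw [← Real.exp_add]; simp
      linear_combination x * h2
    rw [hf, show (2 * (Real.sqrt u - T)) = (2*(Real.sqrt u - T)) by ring, key]
    field_simp
  -- positivity of f
  have hfpos : ∀ u : ℝ, 0 < u → 0 < f u x := by
    intro u hu
    have hs : 0 < Real.sqrt u := Real.sqrt_pos.2 hu
    rw [hfrw u hu]
    positivity
  -- antitonicity of f
  have hanti : ∀ u v : ℝ, 0 < u → u ≤ v → f v x ≤ f u x := by
    intro u v hu huv
    have hv : 0 < v := lt_of_lt_of_le hu huv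
    have hsu : 0 < Real.sqrt u := Real.sqrt_pos.2 hu
    have hsv : 0 < Real.sqrt v := Real.sqrt_pos.2 hv
    rw [hfrw u hu, hfrw v hv]
    have hmono := (aux_phi_mono x T hx hx2).monotoneOn
      (Real.sqrt_nonneg u) (Real.sqrt_nonneg v) (Real.sqrt_le_sqrt huv)
    have hDu : 0 < Real.sqrt u * (Real.exp (Real.sqrt u - T) + x * Real.exp (T - Real.sqrt u)) := by
      positivity
    gcongr

  -- measurability
  have hmeas : Measurable (fun u => f u x) := by
    have : (fun u => f u x) = fun u => (x / Real.pi) * (1 / Real.sqrt u) *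
        (Real.exp (Real.sqrt u - T) / (Real.exp (2 * (Real.sqrt u - T)) + x)) :=
      funext fun u => hf u x
    rw [this]; fun_prop
  -- integrability of f on [0, Nt*h]
  have hint_main : IntervalIntegrable (fun u => f u x) volume 0 ((Nt:ℝ) * h) := by
    have hg : IntervalIntegrable (fun u : ℝ => Real.sqrt x / (2*Real.pi) * u ^ (-(1:ℝ)/2))
        volume 0 ((Nt:ℝ) * h) :=
      (intervalIntegrable_rpow' (by norm_num)).const_mul _
    refine hg.mono_fun' hmeas.aestronglyMeasurable ?_
    rw [Set.uIoc_of_le hb.le]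
    filter_upwards [ae_restrict_mem measurableSet_Ioc] with u hu
    obtain ⟨hu0, hub⟩ := hu
    have hsu : 0 < Real.sqrt u := Real.sqrt_pos.2 hu0
    have hsx : 0 < Real.sqrt x := Real.sqrt_pos.2 hx
    rw [Real.norm_eq_abs, abs_of_pos (hfpos u hu0), hfrw u hu0]
    have hAM : 2 * Real.sqrt x ≤ Real.exp (Real.sqrt u - T) + x * Real.exp (T - Real.sqrt u) := by
      have h2 : Real.exp (Real.sqrt u - T) * Real.exp (T - Real.sqrt u) = 1 := by
        rw [← Real.exp_add]; simp
      have hxs : Real.sqrt x * Real.sqrt x = x := Real.mul_self_sqrt hx.le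
      nlinarith [sq_nonneg (Real.exp (Real.sqrt u - T) - Real.sqrt x), Real.exp_pos (T - Real.sqrt u),
        Real.exp_pos (Real.sqrt u - T)]
    have hrpow : u ^ (-(1:ℝ)/2) = (Real.sqrt u)⁻¹ := by
      rw [show (-(1:ℝ)/2) = -(1/2) by ring, Real.rpow_neg hu0.le, ← Real.sqrt_eq_rpow]
    rw [hrpow]
    calc x / Real.pi / (Real.sqrt u * (Real.exp (Real.sqrt u - T) + x * Real.exp (T - Real.sqrt u)))
        ≤ x / Real.pi / (Real.sqrt u * (2 * Real.sqrt x)) := by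
          gcongr
      _ = Real.sqrt x / (2*Real.pi) * (Real.sqrt u)⁻¹ := by
          have hxs : Real.sqrt x * Real.sqrt x = x := Real.mul_self_sqrt hx.le
          rw [div_div]
          field_simp
          linear_combination (-1) * hxs
  -- per-interval integrability
  have hintk : ∀ k : ℕ, (k:ℝ)+1 ≤ Nt →
      IntervalIntegrable (fun u => f u x) volume ((k:ℝ)*h) (((k:ℝ)+1)*h) := by
    intro k hk
    apply hint_main.mono_set'
    rw [Set.uIoc_of_le hb.le, Set.uIoc_of_le (by nlinarith : (k:ℝ)*h ≤ ((k:ℝ)+1)*h)]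
    exact Set.Ioc_subset_Ioc (by positivity) (by nlinarith)
  -- Riemann sum below integral
  have hRiemann : S x ≤ I x := by
    rw [hS, hI, h4T]
    have hadj : ∑ k ∈ Finset.range Nt, ∫ u in ((k:ℝ)*h)..(((k:ℝ)+1)*h), f u x
        = ∫ u in (0:ℝ)..((Nt:ℝ)*h), f u x := by
      have := intervalIntegral.sum_integral_adjacent_intervals (μ := volume)
        (f := fun u => f u x) (a := fun k : ℕ => (k:ℝ)*h) (n := Nt)
        (fun k hk => by
          have : ((k:ℝ))+1 ≤ (Nt:ℝ) := by exact_mod_cast Nat.succ_le_of_lt hk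
          simpa [Nat.cast_add, Nat.cast_one] using hintk k this)
      simpa [Nat.cast_add, Nat.cast_one] using this
    rw [← hadj, Finset.mul_sum]
    rw [show Finset.Icc 1 Nt = Finset.Ico 1 (Nt+1) by rw [Finset.Ico_add_one_right_eq_Icc]]
    rw [Finset.sum_Ico_eq_sum_range]
    simp only [Nat.add_sub_cancel, Nat.cast_add, Nat.cast_one]
    apply Finset.sum_le_sum
    intro k hk
    have hk' : (k:ℝ)+1 ≤ (Nt:ℝ) := by exact_mod_cast Nat.succ_le_of_lt (Finset.mem_range.1 hk)
    have hkh : (0:ℝ) ≤ (k:ℝ)*h := by positivity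
    have hle : (k:ℝ)*h ≤ ((k:ℝ)+1)*h := by nlinarith
    rw [intervalIntegral.integral_of_le hle]
    have hC : h * f ((1+(k:ℝ))*h) x = ∫ u in Set.Ioc ((k:ℝ)*h) (((k:ℝ)+1)*h),
        f (((k:ℝ)+1)*h) x := by
      rw [MeasureTheory.setIntegral_const, Real.volume_real_Ioc_of_le hle, smul_eq_mul,
        show (1+(k:ℝ))*h = ((k:ℝ)+1)*h by ring]
      ring
    rw [hC]
    apply MeasureTheory.setIntegral_mono_on
    · exact integrableOn_const (by rw [Real.volume_Ioc]; exact ENNReal.ofReal_ne_top)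
    · exact (intervalIntegrable_iff_integrableOn_Ioc_of_le hle).1 (hintk k hk')
    · exact measurableSet_Ioc
    · intro u hu
      exact hanti u _ (lt_of_le_of_lt hkh hu.1) hu.2
  -- S nonneg
  have hSnn : 0 ≤ S x := by
    rw [hS]
    apply mul_nonneg hh.le
    apply Finset.sum_nonneg
    intro j hj
    have hj1 : 1 ≤ j := (Finset.mem_Icc.1 hj).1
    have : (0:ℝ) < j * h := by
      have : (1:ℝ) ≤ (j:ℝ) := by exact_mod_cast hj1
      nlinarith
    exact (hfpos _ this).le
  -- integral bound via FTC
  have hIlt : I x < Real.sqrt x := by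
    have hsx : 0 < Real.sqrt x := Real.sqrt_pos.2 hx
    set F : ℝ → ℝ := fun u =>
      (2*Real.sqrt x/Real.pi) * Real.arctan (Real.exp (Real.sqrt u - T) / Real.sqrt x) with hF
    have hcont : ContinuousOn F (Set.Icc 0 ((Nt:ℝ)*h)) := by
      apply Continuous.continuousOn
      apply Continuous.mul continuous_const
      exact Real.continuous_arctan.comp
        (((Real.continuous_sqrt.sub continuous_const).rexp).div_const _)
    have hderiv : ∀ u ∈ Set.Ioo (0:ℝ) ((Nt:ℝ)*h), HasDerivWithinAt F (f u x) (Set.Ioi u) u := by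
      intro u hu
      have hu0 : 0 < u := hu.1
      have hsu : 0 < Real.sqrt u := Real.sqrt_pos.2 hu0
      have h1 : HasDerivAt (fun u : ℝ => Real.sqrt u - T) (1/(2*Real.sqrt u)) u :=
        (Real.hasDerivAt_sqrt hu0.ne').sub_const T
      have h2 : HasDerivAt (fun u : ℝ => Real.exp (Real.sqrt u - T) / Real.sqrt x)
          (Real.exp (Real.sqrt u - T) * (1/(2*Real.sqrt u)) / Real.sqrt x) u := h1.exp.div_const _
      have h4 := (Real.hasDerivAt_arctan (Real.exp (Real.sqrt u - T) / Real.sqrt x)).comp u h2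
      have h6 := h4.const_mul (2*Real.sqrt x/Real.pi)
      have heq : (2*Real.sqrt x/Real.pi) *
          (1 / (1 + (Real.exp (Real.sqrt u - T) / Real.sqrt x)^2) *
            (Real.exp (Real.sqrt u - T) * (1/(2*Real.sqrt u)) / Real.sqrt x)) = f u x := by
        have hxs : Real.sqrt x * Real.sqrt x = x := Real.mul_self_sqrt hx.le
        have hex : Real.exp (2 * (Real.sqrt u - T))
            = Real.exp (Real.sqrt u - T) * Real.exp (Real.sqrt u - T) := by
          rw [← Real.exp_add]; ring_nf
        rw [hf, hex]
        have hden : (0:ℝ) < Real.exp (Real.sqrt u - T) * Real.exp (Real.sqrt u - T) + x := by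
          positivity
        field_simp
        ring_nf
        rw [Real.sq_sqrt hx.le]; ring
      rw [← heq]
      exact h6.hasDerivWithinAt
    have hFTC := intervalIntegral.integral_eq_sub_of_hasDeriv_right_of_le hb.le hcont hderiv hint_main
    rw [hI, h4T, hFTC]
    have hF0 : 0 < F 0 := by
      apply mul_pos (by positivity)
      have : Real.arctan 0 < Real.arctan (Real.exp (Real.sqrt 0 - T) / Real.sqrt x) :=
        Real.arctan_strictMono (by positivity)
      rw [Real.arctan_zero] at this
      exact this
    have hFb : F ((Nt:ℝ)*h) < (2*Real.sqrt x/Real.pi) * (Real.pi/2) := by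
      exact mul_lt_mul_of_pos_left (Real.arctan_lt_pi_div_two _) (by positivity)
    have : (2*Real.sqrt x/Real.pi) * (Real.pi/2) = Real.sqrt x := by
      field_simp
    linarith
  have hsx : Real.sqrt x ≤ Real.exp (2 - T) := by
    calc Real.sqrt x ≤ Real.sqrt (Real.exp (4 - 2*T)) := Real.sqrt_le_sqrt hx2
      _ = Real.exp (2 - T) := by
          rw [show Real.exp (4 - 2*T) = Real.exp (2 - T)^2 by rw [sq, ← Real.exp_add]; ring_nf,
            Real.sqrt_sq (Real.exp_pos _).le]
  refine ⟨by linarith, ?_⟩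
  rw [abs_of_nonneg (by linarith)]
  have := Real.exp_pos (2 - T)
  linarith
end

section
/- With H_N as above, H_{2N}(1) = N + 1/2 − √(2N) F₁(1) − F₂(1), where F₁(1) = (1/π) log(1+√2). Hence N − H_{2N}(1) = Θ(√N) as N → ∞, with N − H_{2N}(1) ∼ (√2 log(1+√2)/π) √N ≈ 0.4 √N. -/
open Real MeasureTheory Filter

lemma integral_one_div_mul_sqrt :
    (∫ t in Set.Ioi (1:ℝ), 1 / (t * Real.sqrt (1 + t ^ 2))) = Real.log (1 + Real.sqrt 2) := by
  have key := integral_Ioi_of_hasDerivAt_of_nonneg' (a := (1:ℝ))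
      (g := fun t => -Real.arsinh t⁻¹)
      (g' := fun t => 1 / (t * Real.sqrt (1 + t ^ 2))) (l := 0)
      ?_ ?_ ?_
  · rw [key]
    have : Real.arsinh (1:ℝ)⁻¹ = Real.log (1 + Real.sqrt 2) := by
      rw [inv_one, Real.arsinh]
      norm_num
    rw [this]; ring
  · intro x hx
    have hx1 : (1:ℝ) ≤ x := hx
    have hx0 : 0 < x := lt_of_lt_of_le one_pos hx1
    have h1 : HasDerivAt (fun t : ℝ => t⁻¹) (-(x ^ 2)⁻¹) x := hasDerivAt_inv hx0.ne'
    have h2 := (Real.hasDerivAt_arsinh x⁻¹).comp x h1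
    have h3 := h2.neg
    have hs : Real.sqrt (1 + (x⁻¹) ^ 2) = Real.sqrt (1 + x ^ 2) / x := by
      rw [show (1 : ℝ) + (x⁻¹) ^ 2 = (1 + x ^ 2) / x ^ 2 by field_simp; ring,
        Real.sqrt_div (by positivity), Real.sqrt_sq hx0.le]
    have hsp : 0 < Real.sqrt (1 + x ^ 2) := Real.sqrt_pos.2 (by positivity)
    have heq : (1 : ℝ) / (x * Real.sqrt (1 + x ^ 2))
        = -((Real.sqrt (1 + (x⁻¹) ^ 2))⁻¹ * -(x ^ 2)⁻¹) := by
      rw [hs]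
      field_simp
    show HasDerivAt (fun t : ℝ => -Real.arsinh t⁻¹) (1 / (x * Real.sqrt (1 + x ^ 2))) x
    rw [heq]
    exact h3
  · intro x hx
    have hx0 : 0 < x := lt_trans one_pos hx
    positivity
  · have h1 : Tendsto (fun t : ℝ => t⁻¹) atTop (nhds 0) := tendsto_inv_atTop_zero
    have h2 : Tendsto (fun t : ℝ => Real.arsinh t⁻¹) atTop (nhds (Real.arsinh 0)) :=
      (Real.continuous_arsinh.tendsto 0).comp h1
    rw [Real.arsinh_zero] at h2
    simpa using h2.neg

theorem H_at_one_asymptotics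
    (F₁ F₂ : ℝ → ℝ)
    (hF₁ : ∀ y, F₁ y = (1 / Real.pi) * ∫ t in Set.Ioi y, 1 / (t * Real.sqrt (1 + t ^ 2)))
    (hF₂ : ∀ y, F₂ y = (1 / Real.pi ^ 2) *
        ∫ t in Set.Ioi y, (1 / t) * Real.log (t / (1 + Real.sqrt (1 + t ^ 2))))
    (H : ℕ → ℝ → ℝ)
    (hH : ∀ N y, H N y = ((N:ℝ) + 1) / 2 - Real.sqrt N * F₁ y - F₂ y) :
    (∀ N : ℕ, H (2 * N) 1 = (N:ℝ) + 1/2 - Real.sqrt (2 * N) * F₁ 1 - F₂ 1) ∧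
    F₁ 1 = (1 / Real.pi) * Real.log (1 + Real.sqrt 2) ∧
    Tendsto (fun N : ℕ => ((N:ℝ) - H (2 * N) 1) / Real.sqrt N) atTop
      (nhds (Real.sqrt 2 * Real.log (1 + Real.sqrt 2) / Real.pi)) := by
  have hF1val : F₁ 1 = (1 / Real.pi) * Real.log (1 + Real.sqrt 2) := by
    rw [hF₁ 1, integral_one_div_mul_sqrt]
  refine ⟨?_, hF1val, ?_⟩
  · intro N
    rw [hH]
    push_cast
    ring_nf
  · have hsqrt2N : ∀ N : ℕ, Real.sqrt ((2 * N : ℕ) : ℝ) = Real.sqrt 2 * Real.sqrt N := by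
      intro N
      push_cast
      rw [Real.sqrt_mul (by norm_num)]
    have hlim : Tendsto (fun N : ℕ => Real.sqrt 2 * F₁ 1 + (F₂ 1 - 1/2) / Real.sqrt N)
        atTop (nhds (Real.sqrt 2 * F₁ 1 + 0)) := by
      refine tendsto_const_nhds.add ?_
      exact Tendsto.div_atTop tendsto_const_nhds
        (((tendsto_rpow_atTop (by norm_num : (0:ℝ) < 1/2)).congr
          fun x => (Real.sqrt_eq_rpow x).symm).comp tendsto_natCast_atTop_atTop)
    have heq : ∀ᶠ N : ℕ in atTop,
        Real.sqrt 2 * F₁ 1 + (F₂ 1 - 1/2) / Real.sqrt N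
          = ((N:ℝ) - H (2 * N) 1) / Real.sqrt N := by
      filter_upwards [eventually_ge_atTop 1] with N hN
      have hNpos : (0:ℝ) < Real.sqrt N := Real.sqrt_pos.2 (by exact_mod_cast hN)
      rw [hH, hsqrt2N]
      push_cast
      field_simp
      ring
    have := hlim.congr' heq
    rw [add_zero, hF1val] at this
    convert this using 2
    ring
end
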